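/- arXiv:2110.10650 — 3 statements merged into one kernel-verified Lean document; each statement's English description precedes it below -/
import Mathlib

section
/- (Random competition filter satisfies attention overload.) Let X be a finite set of alternatives, J a finite index set, and for each j ∈ J let Γ_j map every nonempty S ⊆ X to a nonempty subset Γ_j(S) ⊆ S satisfying the competition filter property: if a ∈ Γ_j(S) and a ∈ T ⊆ S, then a ∈ Γ_j(T). Let α_j ≥ 0 with Σ_{j∈J} α_j = 1 and define μ(T|S) = Σ_{j∈J} α_j·1(Γ_j(S) = T). Then μ is an attention rule and μ satisfies attention overload. -/
open scoped Classical
open Finset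

/-- A choice rule: probabilities are nonnegative on the choice problem, zero off it,
and sum to one over each nonempty choice problem. -/
def IsChoiceRule {α : Type*} [Fintype α] [DecidableEq α]
    (π : α → Finset α → ℝ) : Prop :=
  ∀ S : Finset α, S.Nonempty →
    (∀ a ∈ S, 0 ≤ π a S) ∧ (∀ a : α, a ∉ S → π a S = 0) ∧ (∑ a ∈ S, π a S = 1)

/-- An attention rule: weights are nonnegative on nonempty subsets of the choice problem,
zero elsewhere, and sum to one over the nonempty subsets. -/
def IsAttentionRule {α : Type*} [Fintype α] [DecidableEq α]
    (μ : Finset α → Finset α → ℝ) : Prop :=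
  ∀ S : Finset α, S.Nonempty →
    (∀ T : Finset α, T.Nonempty → T ⊆ S → 0 ≤ μ T S) ∧
    (∀ T : Finset α, ¬(T.Nonempty ∧ T ⊆ S) → μ T S = 0) ∧
    (∑ T ∈ S.powerset.filter (fun T => T.Nonempty), μ T S = 1)

/-- Attention frequency of alternative `a` in choice problem `S` under attention rule `μ`. -/
noncomputable def attFreq {α : Type*} [Fintype α] [DecidableEq α]
    (μ : Finset α → Finset α → ℝ) (a : α) (S : Finset α) : ℝ :=
  ∑ T ∈ S.powerset.filter (fun T => a ∈ T), μ T S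

/-- Attention overload: attention frequency weakly decreases as the choice problem expands. -/
def AttentionOverload {α : Type*} [Fintype α] [DecidableEq α]
    (μ : Finset α → Finset α → ℝ) : Prop :=
  ∀ (a : α) (T S : Finset α), a ∈ T → T ⊆ S → attFreq μ a S ≤ attFreq μ a T

/-- `a` is the `r`-maximum of `T`. -/
def IsMaxOf {α : Type*} (r : α → α → Prop) (a : α) (T : Finset α) : Prop :=
  a ∈ T ∧ ∀ b ∈ T, b ≠ a → r a b

/-- The choice rule `π` is represented by the preference `r` and the attention rule `μ`. -/
noncomputable def Represents {α : Type*} [Fintype α] [DecidableEq α]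
    (r : α → α → Prop) (μ : Finset α → Finset α → ℝ) (π : α → Finset α → ℝ) : Prop :=
  IsAttentionRule μ ∧
  ∀ S : Finset α, S.Nonempty → ∀ a ∈ S,
    π a S = ∑ T ∈ S.powerset, (if IsMaxOf r a T then μ T S else 0)

/-- `π` is an Attention Overload Model. -/
noncomputable def IsAOM {α : Type*} [Fintype α] [DecidableEq α]
    (π : α → Finset α → ℝ) : Prop :=
  ∃ (r : α → α → Prop) (μ : Finset α → Finset α → ℝ),
    IsStrictTotalOrder α r ∧ AttentionOverload μ ∧ Represents r μ π

/-- `π(U_⪰(a) | T)`: probability of choosing from the weak upper contour set of `a` in `T`. -/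
noncomputable def piUpper {α : Type*} [Fintype α] [DecidableEq α]
    (π : α → Finset α → ℝ) (r : α → α → Prop) (a : α) (T : Finset α) : ℝ :=
  ∑ b ∈ T.filter (fun b => r b a ∨ b = a), π b T

/-- Attention Compensation (AC). -/
noncomputable def SatisfiesAC {α : Type*} [Fintype α] [DecidableEq α]
    (π : α → Finset α → ℝ) (r : α → α → Prop) : Prop :=
  ∀ (a : α) (T S : Finset α), a ∈ T → T ⊆ S → π a S ≤ piUpper π r a T

/-- a random competition filter is an attention rule satisfying attention
overload. -/
theorem random_competition_filter_attention_overload {α : Type*} [Fintype α] [DecidableEq α]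
    {J : Type*} [Fintype J] (Γ : J → Finset α → Finset α)
    (hΓ : ∀ (j : J) (S : Finset α), S.Nonempty → (Γ j S).Nonempty ∧ Γ j S ⊆ S)
    (hCF : ∀ (j : J) (a : α) (T S : Finset α), a ∈ Γ j S → a ∈ T → T ⊆ S → a ∈ Γ j T)
    (w : J → ℝ) (hw : ∀ j, 0 ≤ w j) (hsum : ∑ j, w j = 1) :
    IsAttentionRule (fun T S => ∑ j, w j * (if Γ j S = T then (1 : ℝ) else 0)) ∧
    AttentionOverload (fun T S => ∑ j, w j * (if Γ j S = T then (1 : ℝ) else 0)) := by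
 classical
  have key : ∀ (a : α) (S : Finset α), S.Nonempty →
      attFreq (fun T S => ∑ j, w j * (if Γ j S = T then (1 : ℝ) else 0)) a S
        = ∑ j, w j * (if a ∈ Γ j S then (1:ℝ) else 0) := by
    intro a S hS
    unfold attFreq
    rw [Finset.sum_comm]
    refine Finset.sum_congr rfl fun j _ => ?_
    by_cases h : a ∈ Γ j S
    · rw [Finset.sum_eq_single (Γ j S)]
      · simp [h]
      · intro T _ hne; simp [Ne.symm hne]
      · intro hnot
        exact absurd (Finset.mem_filter.mpr
          ⟨Finset.mem_powerset.mpr (hΓ j S hS).2, h⟩) hnot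
    · rw [Finset.sum_eq_zero, if_neg h, mul_zero]
      intro T hT
      have hne : Γ j S ≠ T := by
        rintro rfl; exact h (Finset.mem_filter.mp hT).2
      simp [hne]
  constructor
  · intro S hS
    refine ⟨?_, ?_, ?_⟩
    · intro T _ _
      exact Finset.sum_nonneg fun j _ => mul_nonneg (hw j) (by positivity)
    · intro T hT
      apply Finset.sum_eq_zero
      intro j _
      have : Γ j S ≠ T := by
        intro h; exact hT ⟨h ▸ (hΓ j S hS).1, h ▸ (hΓ j S hS).2⟩
      simp [this]
    · rw [Finset.sum_comm]
      have hj : ∀ j ∈ Finset.univ,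
          (∑ T ∈ S.powerset.filter (fun T => T.Nonempty),
            w j * (if Γ j S = T then (1:ℝ) else 0)) = w j := by
        intro j _
        rw [Finset.sum_eq_single (Γ j S)]
        · simp
        · intro T _ hne; simp [Ne.symm hne]
        · intro h
          exact absurd (Finset.mem_filter.mpr ⟨Finset.mem_powerset.mpr (hΓ j S hS).2,
            (hΓ j S hS).1⟩) h
      rw [Finset.sum_congr rfl hj, hsum]
  · intro a T S haT hTS
    have hT : T.Nonempty := ⟨a, haT⟩
    have hS : S.Nonempty := hT.mono hTS
    rw [key a S hS, key a T hT]
    refine Finset.sum_le_sum fun j _ => ?_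
    by_cases h : a ∈ Γ j S
    · have := hCF j a T S h haT hTS
      simp [h, this]
    · simp only [h, if_neg, mul_zero, if_false]
      split <;> [exact mul_nonneg (hw j) one_pos.le; simp]
end

section
/- (Logit attention satisfies attention overload.) Let X be a finite set of alternatives and define for every nonempty S ⊆ X and nonempty T ⊆ S the logit attention rule with parameter ς = 2: μ(T|S) = |T|² / Σ_{∅≠T'⊆S} |T'|², and μ(T|S) = 0 when T is not a nonempty subset of S. Then μ is an attention rule and satisfies attention overload; that is, φ_μ(a|S) ≤ φ_μ(a|T) whenever a ∈ T ⊆ S. -/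
open scoped Classical
open Finset

/-!
With `ς = 2` every weight is proportional to `|T|²`, and `Σ_{T ⊆ S} |T|² = n (n + 1) 2^(n-2)` for
`n = |S|`. The subsets of `S` avoiding `a` are the subsets of `S \ {a}`, so the attention frequency
of `a ∈ S` is `1 - (n - 1) / (2 (n + 1)) = 1/2 + 1/(n + 1)`, which only depends on `n` and
decreases with it.
-/

namespace Finset

theorem sum_powerset_filter_nonempty_card_sq {ι R : Type*} [Semiring R] (s : Finset ι) :
    ∑ t ∈ s.powerset.filter (·.Nonempty), (#t : R) ^ 2 = ∑ t ∈ s.powerset, (#t : R) ^ 2 :=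
  sum_filter_of_ne fun t _ ht => nonempty_iff_ne_empty.2 fun h => ht (by simp [h])

variable {ι : Type*} [DecidableEq ι]

theorem card_insert_of_mem_powerset {a : ι} {s t : Finset ι} (ha : a ∉ s) (ht : t ∈ s.powerset) :
    #(insert a t) = #t + 1 :=
  card_insert_of_notMem fun hat => ha (mem_powerset.1 ht hat)

variable {R : Type*} [CommRing R]

theorem sum_powerset_card_mul_two (s : Finset ι) :
    (∑ t ∈ s.powerset, (#t : R)) * 2 = #s * 2 ^ #s := by
  induction s using Finset.induction_on with
  | empty => simp
  | @insert a s ha ih =>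
    have hcard : ∀ t ∈ s.powerset, (#(insert a t) : R) = #t + 1 :=
      fun t ht => by rw [card_insert_of_mem_powerset ha ht, Nat.cast_succ]
    rw [sum_powerset_insert ha, sum_congr rfl hcard, sum_add_distrib, sum_const, card_powerset,
      card_insert_of_notMem ha, nsmul_eq_mul]
    push_cast
    linear_combination 2 * ih

theorem sum_powerset_card_sq_mul_four (s : Finset ι) :
    (∑ t ∈ s.powerset, (#t : R) ^ 2) * 4 = #s * (#s + 1) * 2 ^ #s := by
  induction s using Finset.induction_on with
  | empty => simp
  | @insert a s ha ih =>
    have h := sum_powerset_card_mul_two (R := R) s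
    have hsq : ∀ t ∈ s.powerset, (#(insert a t) : R) ^ 2 = (#t : R) ^ 2 + 2 * #t + 1 :=
      fun t ht => by rw [card_insert_of_mem_powerset ha ht]; push_cast; ring
    rw [sum_powerset_insert ha, sum_congr rfl hsq, sum_add_distrib, sum_add_distrib, ← mul_sum,
      sum_const, card_powerset, card_insert_of_notMem ha, nsmul_eq_mul]
    push_cast
    linear_combination 2 * ih + 4 * h

theorem filter_notMem_powerset (s : Finset ι) (a : ι) :
    s.powerset.filter (a ∉ ·) = (s.erase a).powerset := by
  ext t
  simp [subset_erase]

end Finset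

section Logit

variable {α : Type*} [DecidableEq α]

/-- The logit attention rule with parameter `ς = 2`. -/
noncomputable def logitAttention (T S : Finset α) : ℝ :=
  if T.Nonempty ∧ T ⊆ S then
    (T.card : ℝ) ^ 2 / ∑ T' ∈ S.powerset.filter (fun T' => T'.Nonempty), (T'.card : ℝ) ^ 2
  else 0

theorem sum_powerset_card_sq_pos {S : Finset α} (hS : S.Nonempty) :
    0 < ∑ T ∈ S.powerset, (#T : ℝ) ^ 2 := by
  have h := sum_powerset_card_sq_mul_four (R := ℝ) S
  have : (0 : ℝ) < #S := by exact_mod_cast hS.card_pos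
  have : (0 : ℝ) < #S * (#S + 1) * 2 ^ #S := by positivity
  linarith

theorem logitAttention_of_subset {T S : Finset α} (hT : T.Nonempty) (hTS : T ⊆ S) :
    logitAttention T S = (#T : ℝ) ^ 2 / ∑ T' ∈ S.powerset, (#T' : ℝ) ^ 2 := by
  rw [logitAttention, if_pos ⟨hT, hTS⟩, sum_powerset_filter_nonempty_card_sq]

variable [Fintype α]

theorem isAttentionRule_logitAttention : IsAttentionRule (logitAttention (α := α)) := by
  intro S hS
  refine ⟨fun T hT hTS => ?_, fun T hT => if_neg hT, ?_⟩
  · rw [logitAttention_of_subset hT hTS]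
    positivity
  · rw [sum_congr rfl fun T hT => logitAttention_of_subset (mem_filter.1 hT).2
      (mem_powerset.1 (mem_filter.1 hT).1), ← sum_div, sum_powerset_filter_nonempty_card_sq,
      div_self (sum_powerset_card_sq_pos hS).ne']

theorem attFreq_logitAttention {a : α} {S : Finset α} (ha : a ∈ S) :
    attFreq logitAttention a S = 1 / 2 + 1 / (#S + 1) := by
  have hsplit : ∑ T ∈ S.powerset.filter (a ∈ ·), (#T : ℝ) ^ 2
      = ∑ T ∈ S.powerset, (#T : ℝ) ^ 2 - ∑ T ∈ (S.erase a).powerset, (#T : ℝ) ^ 2 := by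
    rw [← filter_notMem_powerset, eq_sub_iff_add_eq]
    exact sum_filter_add_sum_filter_not _ _ _
  have hS := sum_powerset_card_sq_mul_four (R := ℝ) S
  have hSa := sum_powerset_card_sq_mul_four (R := ℝ) (S.erase a)
  have hD := sum_powerset_card_sq_pos ⟨a, ha⟩
  rw [attFreq, sum_congr rfl fun T hT => logitAttention_of_subset ⟨a, (mem_filter.1 hT).2⟩
    (mem_powerset.1 (mem_filter.1 hT).1), ← sum_div, hsplit]
  obtain ⟨m, hm⟩ : ∃ m, #(S.erase a) = m := ⟨_, rfl⟩
  rw [← card_erase_add_one ha, hm] at hS ⊢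
  rw [hm] at hSa
  field_simp
  push_cast at hS ⊢
  rw [pow_succ] at hS
  linear_combination (m / 4 : ℝ) * hS - ((m + 2) / 2 : ℝ) * hSa

theorem attentionOverload_logitAttention : AttentionOverload (logitAttention (α := α)) := by
  intro a T S haT hTS
  rw [attFreq_logitAttention haT, attFreq_logitAttention (hTS haT)]
  gcongr

end Logit

/-- the logit attention rule with ς = 2 is an attention rule satisfying
attention overload. -/
theorem logit_attention_overload {α : Type*} [Fintype α] [DecidableEq α] :
    IsAttentionRule (fun T S : Finset α =>
      if T.Nonempty ∧ T ⊆ S then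
        (T.card : ℝ) ^ 2 / ∑ T' ∈ S.powerset.filter (fun T' => T'.Nonempty), (T'.card : ℝ) ^ 2
      else 0) ∧
    AttentionOverload (fun T S : Finset α =>
      if T.Nonempty ∧ T ⊆ S then
        (T.card : ℝ) ^ 2 / ∑ T' ∈ S.powerset.filter (fun T' => T'.Nonempty), (T'.card : ℝ) ^ 2
      else 0) :=
  ⟨isAttentionRule_logitAttention, attentionOverload_logitAttention⟩
end

section
/- (Attention frequency lower bound under attentive at binaries.) Let X be a finite set of alternatives, η ∈ [0,1], and let π be represented by (≻, μ) where μ satisfies attention overload and the η-attentive-at-binaries condition: μ({a}|{a,b}) ≤ η and μ({b}|{a,b}) ≤ η for all distinct a, b ∈ X. Then for all distinct a, b ∈ X, φ_μ(a|{a,b}) ≥ max{ max over R with {a,b} ⊆ R ⊆ X of π(a|R), 1−η }. -/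
open scoped Classical
open Finset

lemma my_subset_pair {α : Type*} [DecidableEq α] {a b : α} {T : Finset α} :
    T ⊆ {a, b} ↔ T = ∅ ∨ T = {a} ∨ T = {b} ∨ T = {a, b} := by
  rw [← Finset.coe_subset]
  push_cast
  rw [Set.subset_pair_iff_eq, ← Finset.coe_empty, ← Finset.coe_singleton,
    ← Finset.coe_singleton (a := b)]
  constructor
  · rintro (h | h | h | h)
    · exact Or.inl (Finset.coe_injective h)
    · exact Or.inr (Or.inl (Finset.coe_injective h))
    · exact Or.inr (Or.inr (Or.inl (Finset.coe_injective h)))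
    · refine Or.inr (Or.inr (Or.inr (Finset.coe_injective ?_)))
      rw [h]; push_cast; rfl
  · rintro (h | h | h | h) <;> subst h <;> simp

/-- attention frequency lower bound under attentive at binaries. -/
theorem attFreq_lower_bound_attentive_at_binaries {α : Type*} [Fintype α] [DecidableEq α]
    (π : α → Finset α → ℝ) (μ : Finset α → Finset α → ℝ) (r : α → α → Prop)
    (hπ : IsChoiceRule π) (hr : IsStrictTotalOrder α r)
    (hAO : AttentionOverload μ) (hrep : Represents r μ π)
    (η : ℝ) (hη0 : 0 ≤ η) (hη1 : η ≤ 1)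
    (hbin : ∀ a b : α, a ≠ b → μ {a} {a, b} ≤ η ∧ μ {b} {a, b} ≤ η) :
    ∀ a b : α, a ≠ b →
      max (sSup ((fun R => π a R) '' {R : Finset α | {a, b} ⊆ R})) (1 - η)
        ≤ attFreq μ a {a, b} := by
  intro a b hab
  obtain ⟨hatt, hrepr⟩ := hrep
  -- π a R ≤ attFreq μ a R for a ∈ R
  have hpi_le : ∀ R : Finset α, a ∈ R → π a R ≤ attFreq μ a R := by
    intro R haR
    have hRne : R.Nonempty := ⟨a, haR⟩
    rw [hrepr R hRne a haR, attFreq, Finset.sum_filter]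
    apply Finset.sum_le_sum
    intro T hT
    rw [Finset.mem_powerset] at hT
    by_cases hmax : IsMaxOf r a T
    · simp [hmax, hmax.1]
    · simp only [if_neg hmax]
      by_cases haT : a ∈ T
      · simp only [if_pos haT]
        exact (hatt R hRne).1 T ⟨a, haT⟩ hT
      · simp [haT]
  -- compute attFreq μ a {a, b}
  have hSne : ({a, b} : Finset α).Nonempty := ⟨a, by simp⟩
  have hsa : ({a} : Finset α) ≠ {a, b} := by
    intro h
    have hb : b ∈ ({a} : Finset α) := by rw [h]; simp
    exact hab (Finset.mem_singleton.mp hb).symm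
  have hfilt1 : ({a, b} : Finset α).powerset.filter (fun T => a ∈ T) = {{a}, {a, b}} := by
    ext T
    simp only [Finset.mem_filter, Finset.mem_powerset, my_subset_pair,
      Finset.mem_insert, Finset.mem_singleton]
    constructor
    · rintro ⟨h | h | h | h, haT⟩ <;> subst h <;> simp_all
    · rintro (h | h) <;> subst h <;> simp
  have hfilt2 : ({a, b} : Finset α).powerset.filter (fun T => T.Nonempty)
      = {{a}, {b}, {a, b}} := by
    ext T
    simp only [Finset.mem_filter, Finset.mem_powerset, my_subset_pair,
      Finset.mem_insert, Finset.mem_singleton]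
    constructor
    · rintro ⟨h | h | h | h, hne⟩ <;> subst h <;> simp_all
    · rintro (h | h | h) <;> subst h <;>
        simp [Finset.insert_nonempty, Finset.singleton_nonempty]
  have hsum1 : μ {a} {a, b} + μ {b} {a, b} + μ {a, b} {a, b} = 1 := by
    have := (hatt {a, b} hSne).2.2
    rw [hfilt2] at this
    have h1 : ({a} : Finset α) ∉ ({{b}, {a, b}} : Finset (Finset α)) := by
      simp only [Finset.mem_insert, Finset.mem_singleton]
      push_neg
      constructor
      · intro h
        have : a ∈ ({b} : Finset α) := by rw [← h]; simp
        exact hab (Finset.mem_singleton.mp this)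
      · exact hsa
    have h2 : ({b} : Finset α) ∉ ({{a, b}} : Finset (Finset α)) := by
      simp only [Finset.mem_singleton]
      intro h
      have : a ∈ ({b} : Finset α) := by rw [h]; simp
      exact hab (Finset.mem_singleton.mp this)
    rw [Finset.sum_insert h1, Finset.sum_insert h2, Finset.sum_singleton] at this
    linarith
  have hattF : attFreq μ a {a, b} = 1 - μ {b} {a, b} := by
    rw [attFreq, hfilt1, Finset.sum_pair hsa]
    linarith
  have hge : 1 - η ≤ attFreq μ a {a, b} := by
    have := (hbin a b hab).2
    rw [hattF]; linarith
  refine max_le ?_ hge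
  apply Real.sSup_le
  · rintro x ⟨R, hR, rfl⟩
    simp only [Set.mem_setOf_eq] at hR
    have haR : a ∈ R := hR (by simp)
    calc π a R ≤ attFreq μ a R := hpi_le R haR
      _ ≤ attFreq μ a {a, b} := hAO a {a, b} R (by simp) hR
  · linarith
end
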